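/- arXiv:2211.03339 — 8 statements merged into one kernel-verified Lean document; each statement's English description precedes it below -/
import Mathlib

section
/- Let A = (a_{pq}) be an n×n real symmetric matrix, let 1 ≤ i < j ≤ n, let J = J(i,j;c,s) be a Jacobi rotation, and set B = Jᵀ A J. If b_{ij} = 0, then ‖off(B)‖_F² = ‖off(A)‖_F² − 2 a_{ij}². -/
open Matrix

noncomputable def specNorm {m n : ℕ} (A : Matrix (Fin m) (Fin n) ℝ) : ℝ :=
  ‖LinearMap.toContinuousLinearMap (Matrix.toEuclideanLin A)‖

noncomputable def frobNorm {m n : ℕ} (A : Matrix (Fin m) (Fin n) ℝ) : ℝ :=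
  Real.sqrt (∑ p, ∑ q, (A p q) ^ 2)

def offDiag {n : ℕ} (A : Matrix (Fin n) (Fin n) ℝ) : Matrix (Fin n) (Fin n) ℝ :=
  fun p q => if p = q then 0 else A p q

def jacobiRot {n : ℕ} (i j : Fin n) (c s : ℝ) : Matrix (Fin n) (Fin n) ℝ :=
  fun p q =>
    if p = i ∧ q = i then c
    else if p = j ∧ q = j then c
    else if p = i ∧ q = j then s
    else if p = j ∧ q = i then -s
    else if p = q then 1 else 0

open Classical in
noncomputable def eigValsDesc {n : ℕ} (A : Matrix (Fin n) (Fin n) ℝ) : Fin n → ℝ :=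
  if hA : A.IsHermitian then
    fun k => (hA.eigenvalues ∘ Tuple.sort hA.eigenvalues) k.rev
  else 0

noncomputable def singValsDesc {m n : ℕ} (A : Matrix (Fin m) (Fin n) ℝ) : Fin n → ℝ :=
  fun k => Real.sqrt (eigValsDesc (Aᵀ * A) k)
variable {n : ℕ}

lemma jac_col_i (i j : Fin n) (c s : ℝ) (hij : i ≠ j) (k : Fin n) :
    jacobiRot i j c s k i = if k = i then c else if k = j then -s else 0 := by
  simp only [jacobiRot]
  split_ifs <;> simp_all

lemma jac_col_j (i j : Fin n) (c s : ℝ) (hij : i ≠ j) (k : Fin n) :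
    jacobiRot i j c s k j = if k = i then s else if k = j then c else 0 := by
  simp only [jacobiRot]
  split_ifs <;> simp_all

lemma jac_col_o (i j : Fin n) (c s : ℝ) (p : Fin n) (hpi : p ≠ i) (hpj : p ≠ j) (k : Fin n) :
    jacobiRot i j c s k p = if k = p then 1 else 0 := by
  simp only [jacobiRot]
  split_ifs <;> simp_all

lemma sum_ite2 (i j : Fin n) (hij : i ≠ j) (a b : ℝ) (f : Fin n → ℝ) :
    ∑ k, (if k = i then a else if k = j then b else 0) * f k = a * f i + b * f j := by
  have h : ∀ k, (if k = i then a else if k = j then b else 0) * f k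
      = (if k = i then a * f i else 0) + (if k = j then b * f j else 0) := by
    intro k
    split_ifs <;> simp_all
  simp [h, Finset.sum_add_distrib]

lemma sum_ite2' (i j : Fin n) (hij : i ≠ j) (a b : ℝ) (f : Fin n → ℝ) :
    ∑ k, f k * (if k = i then a else if k = j then b else 0) = a * f i + b * f j := by
  rw [← sum_ite2 i j hij a b f]
  exact Finset.sum_congr rfl fun k _ => mul_comm _ _

lemma sum_ite1 (p : Fin n) (f : Fin n → ℝ) :
    ∑ k, (if k = p then 1 else 0) * f k = f p := by
  simp [ite_mul]

lemma dot22 (i j : Fin n) (hij : i ≠ j) (a b a' b' : ℝ) :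
    ∑ k, (if k = i then a else if k = j then b else 0) *
      (if k = i then a' else if k = j then b' else 0) = a * a' + b * b' := by
  rw [sum_ite2 i j hij a b]
  simp [hij, hij.symm]

lemma dot2o (i j p : Fin n) (hij : i ≠ j) (hpi : p ≠ i) (hpj : p ≠ j) (a b : ℝ) :
    ∑ k, (if k = i then a else if k = j then b else 0) * (if k = p then 1 else 0) = 0 := by
  rw [sum_ite2 i j hij a b]
  simp [hpi.symm, hpj.symm]

lemma doto2 (i j p : Fin n) (hij : i ≠ j) (hpi : p ≠ i) (hpj : p ≠ j) (a b : ℝ) :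
    ∑ k, (if k = p then 1 else 0) * (if k = i then a else if k = j then b else 0) = 0 := by
  rw [sum_ite1]
  simp [hpi, hpj]

lemma dotoo (p q : Fin n) :
    ∑ k, (if k = p then (1:ℝ) else 0) * (if k = q then 1 else 0) = if p = q then 1 else 0 := by
  rw [sum_ite1]

lemma JtJ (i j : Fin n) (c s : ℝ) (hij : i ≠ j) (hcs : c ^ 2 + s ^ 2 = 1) :
    (jacobiRot i j c s)ᵀ * jacobiRot i j c s = 1 := by
  ext p q
  rw [Matrix.mul_apply]
  simp only [Matrix.transpose_apply, Matrix.one_apply]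
  by_cases hpi : p = i
  · by_cases hqi : q = i
    · rw [hpi, hqi, if_pos rfl]
      simp only [jac_col_i i j c s hij]
      rw [dot22 i j hij]
      nlinarith [hcs]
    · by_cases hqj : q = j
      · rw [hpi, hqj, if_neg hij]
        simp only [jac_col_i i j c s hij, jac_col_j i j c s hij]
        rw [dot22 i j hij]
        ring
      · rw [hpi, if_neg (Ne.symm hqi)]
        simp only [jac_col_i i j c s hij, jac_col_o i j c s q hqi hqj]
        rw [dot2o i j q hij hqi hqj]
  · by_cases hpj : p = j
    · by_cases hqi : q = i
      · rw [hpj, hqi, if_neg (Ne.symm hij)]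
        simp only [jac_col_i i j c s hij, jac_col_j i j c s hij]
        rw [dot22 i j hij]
        ring
      · by_cases hqj : q = j
        · rw [hpj, hqj, if_pos rfl]
          simp only [jac_col_j i j c s hij]
          rw [dot22 i j hij]
          nlinarith [hcs]
        · rw [hpj, if_neg (Ne.symm hqj)]
          simp only [jac_col_j i j c s hij, jac_col_o i j c s q hqi hqj]
          rw [dot2o i j q hij hqi hqj]
    · by_cases hqi : q = i
      · rw [hqi, if_neg hpi]
        simp only [jac_col_i i j c s hij, jac_col_o i j c s p hpi hpj]
        rw [doto2 i j p hij hpi hpj]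
      · by_cases hqj : q = j
        · rw [hqj, if_neg hpj]
          simp only [jac_col_j i j c s hij, jac_col_o i j c s p hpi hpj]
          rw [doto2 i j p hij hpi hpj]
        · simp only [jac_col_o i j c s p hpi hpj, jac_col_o i j c s q hqi hqj]
          rw [dotoo]

lemma sq_frob_eq_trace {n : ℕ} (M : Matrix (Fin n) (Fin n) ℝ) :
    (∑ p, ∑ q, M p q ^ 2) = Matrix.trace (Mᵀ * M) := by
  rw [Finset.sum_comm]
  simp [Matrix.trace, Matrix.mul_apply, Matrix.diag, sq]

/-- If a Jacobi rotation annihilates the (i,j) entry, then the squared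
Frobenius norm of the off-diagonal part drops by `2 a_ij^2`. -/
theorem off_sq_decrease {n : ℕ} (A : Matrix (Fin n) (Fin n) ℝ) (hA : Aᵀ = A)
    (i j : Fin n) (hij : i < j) (c s : ℝ) (hcs : c ^ 2 + s ^ 2 = 1)
    (B : Matrix (Fin n) (Fin n) ℝ)
    (hB : B = (jacobiRot i j c s)ᵀ * A * jacobiRot i j c s)
    (hzero : B i j = 0) :
    frobNorm (offDiag B) ^ 2 = frobNorm (offDiag A) ^ 2 - 2 * A i j ^ 2 := by
  have hne : i ≠ j := Fin.ne_of_lt hij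
  have hJ : (jacobiRot i j c s)ᵀ * jacobiRot i j c s = 1 := JtJ i j c s hne hcs
  have hJ' : jacobiRot i j c s * (jacobiRot i j c s)ᵀ = 1 := mul_eq_one_comm.mp hJ
  have haij : A j i = A i j := (congrFun (congrFun hA j) i).symm
  have hent : ∀ p q, B p q
      = ∑ l, (∑ k, jacobiRot i j c s k p * A k l) * jacobiRot i j c s l q := by
    intro p q
    rw [hB]
    simp only [Matrix.mul_apply, Matrix.transpose_apply]
  have hBo : ∀ p, p ≠ i → p ≠ j → B p p = A p p := by
    intro p hpi hpj
    rw [hent]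
    simp only [jac_col_o i j c s p hpi hpj, sum_ite1]
    simp
  have hBii : B i i = c * (c * A i i + -s * A j i) + -s * (c * A i j + -s * A j j) := by
    rw [hent]
    simp only [jac_col_i i j c s hne]
    simp only [sum_ite2 i j hne]
    rw [sum_ite2' i j hne]
  have hBjj : B j j = s * (s * A i i + c * A j i) + c * (s * A i j + c * A j j) := by
    rw [hent]
    simp only [jac_col_j i j c s hne]
    simp only [sum_ite2 i j hne]
    rw [sum_ite2' i j hne]
  have hBij : B i j = s * (c * A i i + -s * A j i) + c * (c * A i j + -s * A j j) := by
    rw [hent]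
    simp only [jac_col_i i j c s hne, jac_col_j i j c s hne]
    simp only [sum_ite2 i j hne]
    rw [sum_ite2' i j hne]
  have hzero' : s * (c * A i i + -s * A j i) + c * (c * A i j + -s * A j j) = 0 := by
    rw [← hBij]; exact hzero
  have htot : (∑ p, ∑ q, B p q ^ 2) = ∑ p, ∑ q, A p q ^ 2 := by
    rw [sq_frob_eq_trace, sq_frob_eq_trace, hB]
    have e1 : ((jacobiRot i j c s)ᵀ * A * jacobiRot i j c s)ᵀ *
        ((jacobiRot i j c s)ᵀ * A * jacobiRot i j c s)
        = (jacobiRot i j c s)ᵀ * Aᵀ * A * jacobiRot i j c s := by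
      calc ((jacobiRot i j c s)ᵀ * A * jacobiRot i j c s)ᵀ *
            ((jacobiRot i j c s)ᵀ * A * jacobiRot i j c s)
          = (jacobiRot i j c s)ᵀ * Aᵀ *
              (jacobiRot i j c s * (jacobiRot i j c s)ᵀ) * A * jacobiRot i j c s := by
            simp only [Matrix.transpose_mul, Matrix.transpose_transpose, Matrix.mul_assoc]
        _ = (jacobiRot i j c s)ᵀ * Aᵀ * A * jacobiRot i j c s := by
            rw [hJ', Matrix.mul_one]
    rw [e1, Matrix.trace_mul_comm ((jacobiRot i j c s)ᵀ * Aᵀ * A) (jacobiRot i j c s),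
      ← Matrix.mul_assoc, ← Matrix.mul_assoc, hJ', Matrix.one_mul]
  have hsplit : ∀ f : Fin n → ℝ, ∑ p, f p
      = ∑ p ∈ (Finset.univ.erase i).erase j, f p + f j + f i := by
    intro f
    rw [← Finset.sum_erase_add Finset.univ f (Finset.mem_univ i),
      ← Finset.sum_erase_add (Finset.univ.erase i) f
        (Finset.mem_erase.mpr ⟨hne.symm, Finset.mem_univ j⟩)]
  have hdiagrest : ∑ p ∈ (Finset.univ.erase i).erase j, B p p ^ 2
      = ∑ p ∈ (Finset.univ.erase i).erase j, A p p ^ 2 := by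
    refine Finset.sum_congr rfl fun p hp => ?_
    have h1 := Finset.mem_erase.mp hp
    have h2 := Finset.mem_erase.mp h1.2
    rw [hBo p h2.1 h1.1]
  have hdiag : (∑ p, B p p ^ 2) = (∑ p, A p p ^ 2) + 2 * A i j ^ 2 := by
    rw [hsplit (fun p => B p p ^ 2), hsplit (fun p => A p p ^ 2), hdiagrest, hBii, hBjj]
    rw [haij] at hzero'
    rw [haij]
    linear_combination ((c ^ 2 + s ^ 2 + 1) * (A i i ^ 2 + A j j ^ 2 + 2 * A i j ^ 2)) * hcs
      - (2 * (s * (c * A i i + -s * A i j) + c * (c * A i j + -s * A j j))) * hzero'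
  have hfro : ∀ M : Matrix (Fin n) (Fin n) ℝ, frobNorm M ^ 2 = ∑ p, ∑ q, M p q ^ 2 := by
    intro M
    rw [frobNorm, Real.sq_sqrt]
    positivity
  have hoff : ∀ M : Matrix (Fin n) (Fin n) ℝ,
      (∑ p, ∑ q, offDiag M p q ^ 2) = (∑ p, ∑ q, M p q ^ 2) - ∑ p, M p p ^ 2 := by
    intro M
    rw [← Finset.sum_sub_distrib]
    refine Finset.sum_congr rfl fun p _ => ?_
    have h : ∀ q, offDiag M p q ^ 2 = M p q ^ 2 - (if q = p then M p p ^ 2 else 0) := by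
      intro q
      by_cases hq : p = q
      · rw [hq]
        simp [offDiag]
      · simp only [offDiag]
        rw [if_neg hq, if_neg fun h => hq h.symm]
        ring
    rw [Finset.sum_congr rfl fun q _ => h q, Finset.sum_sub_distrib]
    simp
  rw [hfro, hfro, hoff, hoff, htot, hdiag]
  ring
end

section
/- Let n ≥ 2, N = n(n−1)/2, and let A = (a_{pq}) be an n×n real symmetric matrix. Suppose 1 ≤ i < j ≤ n are such that |a_{ij}| = max_{p≠q} |a_{pq}|, and suppose J = J(i,j;c,s) is a Jacobi rotation such that B = Jᵀ A J satisfies b_{ij} = 0. Then ‖off(B)‖_F² ≤ (1 − 1/N) ‖off(A)‖_F². -/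
open Matrix

/-!
Conjugation by a rotation preserves the Frobenius norm and changes the diagonal only in positions
`i` and `j`; on the `2 × 2` pivot block it again preserves the Frobenius norm. Hence the squared
off-diagonal mass drops by exactly `2 a_ij² - 2 b_ij²`, i.e. by `2 a_ij²` once `b_ij = 0`. Since
`a_ij` is the largest off-diagonal entry, the `n(n-1) = 2N` off-diagonal entries of `A` carry at
most `2N a_ij²`, so the drop is at least a `1/N` fraction.
-/

lemma frobNorm_sq {m n : ℕ} (M : Matrix (Fin m) (Fin n) ℝ) :
    frobNorm M ^ 2 = ∑ p, ∑ q, M p q ^ 2 :=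
  Real.sq_sqrt (by positivity)

lemma frobNorm_transpose {m n : ℕ} (M : Matrix (Fin m) (Fin n) ℝ) :
    frobNorm Mᵀ = frobNorm M := by
  rw [frobNorm, frobNorm, Finset.sum_comm]
  rfl

lemma Fintype.sum_eq_sum_of_eq_off_pair {ι G : Type*} [Fintype ι] [AddCommGroup G]
    {f g : ι → G} {a b : ι} (hab : a ≠ b) (hfg : ∀ x, x ≠ a → x ≠ b → f x = g x)
    (hpair : f a + f b = g a + g b) : ∑ x, f x = ∑ x, g x := by
  rw [← sub_eq_zero, ← Finset.sum_sub_distrib,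
    Fintype.sum_eq_add a b hab fun x hx => sub_eq_zero.mpr (hfg x hx.1 hx.2), sub_add_sub_comm,
    hpair, sub_self]

section JacobiRotation

variable {n : ℕ} {i j : Fin n}

lemma mul_jacobiRot_apply (hij : i ≠ j) (c s : ℝ) (M : Matrix (Fin n) (Fin n) ℝ)
    (p q : Fin n) :
    (M * jacobiRot i j c s) p q =
      if q = i then c * M p i - s * M p j
      else if q = j then s * M p i + c * M p j
      else M p q := by
  rw [Matrix.mul_apply]
  split_ifs with hqi hqj
  · rw [Fintype.sum_eq_add i j hij (fun t ht => by simp [jacobiRot, hqi, ht.1, ht.2])]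
    simp [jacobiRot, hqi, hij, hij.symm]
    ring
  · rw [Fintype.sum_eq_add i j hij (fun t ht => by simp [jacobiRot, hqj, ht.1, ht.2])]
    simp [jacobiRot, hqj, hij, hij.symm]
    ring
  · rw [Fintype.sum_eq_single q (fun t ht => by simp [jacobiRot, hqi, hqj, ht])]
    simp [jacobiRot, hqi, hqj]

lemma jacobiRot_transpose_mul_apply (hij : i ≠ j) (c s : ℝ) (M : Matrix (Fin n) (Fin n) ℝ)
    (p q : Fin n) :
    ((jacobiRot i j c s)ᵀ * M) p q =
      if p = i then c * M i q - s * M j q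
      else if p = j then s * M i q + c * M j q
      else M p q := by
  rw [← transpose_apply ((jacobiRot i j c s)ᵀ * M), transpose_mul, transpose_transpose,
    mul_jacobiRot_apply hij]
  rfl

lemma frobNorm_mul_jacobiRot (hij : i ≠ j) {c s : ℝ} (hcs : c ^ 2 + s ^ 2 = 1)
    (M : Matrix (Fin n) (Fin n) ℝ) : frobNorm (M * jacobiRot i j c s) = frobNorm M := by
  unfold frobNorm
  congr 1
  refine Finset.sum_congr rfl fun p _ => Fintype.sum_eq_sum_of_eq_off_pair hij
    (fun q hqi hqj => by rw [mul_jacobiRot_apply hij]; simp [hqi, hqj]) ?_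
  simp only [mul_jacobiRot_apply hij, if_pos, if_neg hij.symm]
  linear_combination (M p i ^ 2 + M p j ^ 2) * hcs

lemma frobNorm_jacobiRot_transpose_mul (hij : i ≠ j) {c s : ℝ} (hcs : c ^ 2 + s ^ 2 = 1)
    (M : Matrix (Fin n) (Fin n) ℝ) : frobNorm ((jacobiRot i j c s)ᵀ * M) = frobNorm M := by
  rw [← frobNorm_transpose, transpose_mul, transpose_transpose, frobNorm_mul_jacobiRot hij hcs,
    frobNorm_transpose]

/-- Invariance of the Frobenius norm for the `2 × 2` pivot block `[[x, y], [y, z]]`. -/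
lemma pivot_block_sq_sum {c s : ℝ} (hcs : c ^ 2 + s ^ 2 = 1) (x y z : ℝ) :
    (c * (c * x - s * y) - s * (c * y - s * z)) ^ 2
      + (s * (s * x + c * y) + c * (s * y + c * z)) ^ 2
      + 2 * (s * (c * x - s * y) + c * (c * y - s * z)) ^ 2 = x ^ 2 + 2 * y ^ 2 + z ^ 2 := by
  linear_combination (c ^ 2 + s ^ 2 + 1) * (x ^ 2 + 2 * y ^ 2 + z ^ 2) * hcs

lemma sum_diag_sq_jacobiRot_conj {A : Matrix (Fin n) (Fin n) ℝ} (hA : Aᵀ = A) (hij : i ≠ j)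
    {c s : ℝ} (hcs : c ^ 2 + s ^ 2 = 1) :
    let B := (jacobiRot i j c s)ᵀ * A * jacobiRot i j c s
    ∑ p, B p p ^ 2 + 2 * B i j ^ 2 = ∑ p, A p p ^ 2 + 2 * A i j ^ 2 := by
  intro B
  have hji : A j i = A i j := by rw [← transpose_apply A, hA]
  have hpivot := pivot_block_sq_sum hcs (A i i) (A i j) (A j j)
  suffices ∑ p, (B p p ^ 2 + if p = i then 2 * B i j ^ 2 else 0)
      = ∑ p, (A p p ^ 2 + if p = i then 2 * A i j ^ 2 else 0) by
    simpa only [Finset.sum_add_distrib, Fintype.sum_ite_eq'] using this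
  refine Fintype.sum_eq_sum_of_eq_off_pair hij (fun p hpi hpj => by
    simp [B, mul_jacobiRot_apply hij, jacobiRot_transpose_mul_apply hij, hpi, hpj]) ?_
  simp only [B, mul_jacobiRot_apply hij, jacobiRot_transpose_mul_apply hij, if_pos, if_neg hij,
    if_neg hij.symm, hji]
  linear_combination hpivot

lemma frobNorm_offDiag_sq (M : Matrix (Fin n) (Fin n) ℝ) :
    frobNorm (offDiag M) ^ 2 = frobNorm M ^ 2 - ∑ p, M p p ^ 2 := by
  rw [frobNorm_sq, frobNorm_sq, ← Finset.sum_sub_distrib]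
  refine Finset.sum_congr rfl fun p _ => ?_
  rw [← Fintype.sum_ite_eq' p (fun q => M p q ^ 2), ← Finset.sum_sub_distrib]
  refine Finset.sum_congr rfl fun q _ => ?_
  by_cases hpq : p = q <;> simp [offDiag, hpq, eq_comm]

lemma frobNorm_offDiag_sq_jacobiRot_conj {A : Matrix (Fin n) (Fin n) ℝ} (hA : Aᵀ = A)
    (hij : i ≠ j) {c s : ℝ} (hcs : c ^ 2 + s ^ 2 = 1) :
    let B := (jacobiRot i j c s)ᵀ * A * jacobiRot i j c s
    frobNorm (offDiag B) ^ 2 = frobNorm (offDiag A) ^ 2 - 2 * A i j ^ 2 + 2 * B i j ^ 2 := by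
  intro B
  have hdiag := sum_diag_sq_jacobiRot_conj hA hij hcs
  rw [frobNorm_offDiag_sq, frobNorm_offDiag_sq, frobNorm_mul_jacobiRot hij hcs,
    frobNorm_jacobiRot_transpose_mul hij hcs]
  linarith

end JacobiRotation

lemma frobNorm_offDiag_sq_le {n : ℕ} {M : Matrix (Fin n) (Fin n) ℝ} {m : ℝ}
    (hM : ∀ p q, p ≠ q → |M p q| ≤ m) :
    frobNorm (offDiag M) ^ 2 ≤ n * (n - 1) * m ^ 2 := by
  calc frobNorm (offDiag M) ^ 2 ≤ ∑ p : Fin n, ∑ q : Fin n, if p = q then 0 else m ^ 2 := by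
        rw [frobNorm_sq]
        gcongr with p _ q _
        by_cases hpq : p = q
        · simp [offDiag, hpq]
        · simpa [offDiag, hpq] using sq_le_sq' (neg_le_of_abs_le (hM p q hpq))
            (le_of_abs_le (hM p q hpq))
    _ = n * (n - 1) * m ^ 2 := by
        have hrow (p : Fin n) : ∑ q : Fin n, (if p = q then 0 else m ^ 2) = (n - 1) * m ^ 2 := by
          simp [Finset.sum_ite, Finset.filter_ne, Nat.cast_sub p.pos]
        simp [hrow, mul_assoc]

theorem classical_jacobi_step_general {n : ℕ} (N : ℕ) (hN : N = n * (n - 1) / 2)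
    (A : Matrix (Fin n) (Fin n) ℝ) (hA : Aᵀ = A)
    (i j : Fin n) (hij : i < j)
    (hmax : ∀ p q : Fin n, p ≠ q → |A p q| ≤ |A i j|)
    (c s : ℝ) (hcs : c ^ 2 + s ^ 2 = 1)
    (B : Matrix (Fin n) (Fin n) ℝ)
    (hB : B = (jacobiRot i j c s)ᵀ * A * jacobiRot i j c s)
    (hzero : B i j = 0) :
    frobNorm (offDiag B) ^ 2 ≤ (1 - 1 / (N : ℝ)) * frobNorm (offDiag A) ^ 2 := by
  have hdrop : frobNorm (offDiag B) ^ 2 = frobNorm (offDiag A) ^ 2 - 2 * A i j ^ 2 := by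
    have h := frobNorm_offDiag_sq_jacobiRot_conj hA hij.ne hcs
    simp only [← hB, hzero] at h
    linarith
  have hcount : (2 * N : ℝ) = n * (n - 1) := by
    have h := Nat.div_mul_cancel (Nat.even_mul_pred_self n).two_dvd
    rw [← hN] at h
    rw [mul_comm, ← Nat.cast_ofNat, ← Nat.cast_mul, h, Nat.cast_mul, Nat.cast_sub i.pos,
      Nat.cast_one]
  have hbound : frobNorm (offDiag A) ^ 2 / N ≤ 2 * A i j ^ 2 := by
    refine div_le_of_le_mul₀ N.cast_nonneg (by positivity) ?_
    have h := frobNorm_offDiag_sq_le hmax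
    rw [sq_abs, ← hcount] at h
    linarith
  calc frobNorm (offDiag B) ^ 2 = frobNorm (offDiag A) ^ 2 - 2 * A i j ^ 2 := hdrop
    _ ≤ frobNorm (offDiag A) ^ 2 - frobNorm (offDiag A) ^ 2 / N := by linarith
    _ = (1 - 1 / (N : ℝ)) * frobNorm (offDiag A) ^ 2 := by ring

/-- One classical Jacobi step with the optimal pivot reduces the squared
off-diagonal Frobenius norm by a factor `1 - 1/N`, `N = n(n-1)/2`. -/
theorem classical_jacobi_step {n : ℕ} (hn : 2 ≤ n) (N : ℕ) (hN : N = n * (n - 1) / 2)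
    (A : Matrix (Fin n) (Fin n) ℝ) (hA : Aᵀ = A)
    (i j : Fin n) (hij : i < j)
    (hmax : ∀ p q : Fin n, p ≠ q → |A p q| ≤ |A i j|)
    (c s : ℝ) (hcs : c ^ 2 + s ^ 2 = 1)
    (B : Matrix (Fin n) (Fin n) ℝ)
    (hB : B = (jacobiRot i j c s)ᵀ * A * jacobiRot i j c s)
    (hzero : B i j = 0) :
    frobNorm (offDiag B) ^ 2 ≤ (1 - 1 / (N : ℝ)) * frobNorm (offDiag A) ^ 2 :=
  classical_jacobi_step_general N hN A hA i j hij hmax c s hcs B hB hzero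
end

section
/- Let Z, δZ ∈ ℝ^{n×n} be such that Z + δZ is orthogonal, and set β = 2‖δZ‖·‖Z‖ + ‖δZ‖². If β < 1, then every eigenvalue of ZᵀZ lies in the interval [1 − β, 1 + β]; in particular Z is invertible and its spectral condition number κ(Z) = σ_1(Z)/σ_n(Z) satisfies κ(Z) ≤ √((1 + β)/(1 − β)). -/
open Matrix

/-! Expanding `(Z + δZ)ᵀ (Z + δZ) = 1` writes `ZᵀZ - 1` as `-(ZᵀδZ + δZᵀZ + δZᵀδZ)`, whose spectral
norm is at most `β`. Each eigenvalue `λ` of `ZᵀZ` gives `λ - 1` in the spectrum of `ZᵀZ - 1`, so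
`|λ - 1| ≤ β`. Since `‖ZᵀZ - 1‖ < 1`, the Neumann series inverts `ZᵀZ`, hence `Z`; and the singular
values of `Z` are the square roots of eigenvalues in `[1 - β, 1 + β]`. -/

open scoped Matrix.Norms.L2Operator

theorem specNorm_eq_norm {m n : ℕ} (A : Matrix (Fin m) (Fin n) ℝ) : specNorm A = ‖A‖ := rfl

theorem norm_star_mul_self_sub_one_le {R : Type*} [NormedRing R] [StarRing R] [NormedStarGroup R]
    (Z δZ : R) (h : star (Z + δZ) * (Z + δZ) = 1) :
    ‖star Z * Z - 1‖ ≤ 2 * ‖δZ‖ * ‖Z‖ + ‖δZ‖ ^ 2 := by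
  have hE : star Z * Z - 1 = -(star Z * δZ + star δZ * Z + star δZ * δZ) := by
    rw [← h, star_add]; noncomm_ring
  calc ‖star Z * Z - 1‖ ≤ ‖star Z * δZ‖ + ‖star δZ * Z‖ + ‖star δZ * δZ‖ := by
        rw [hE, norm_neg]; exact norm_add₃_le
    _ ≤ ‖Z‖ * ‖δZ‖ + ‖δZ‖ * ‖Z‖ + ‖δZ‖ * ‖δZ‖ := by
        gcongr <;> exact (norm_mul_le _ _).trans_eq (by rw [norm_star])
    _ = 2 * ‖δZ‖ * ‖Z‖ + ‖δZ‖ ^ 2 := by ring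

theorem isUnit_of_norm_sub_one_lt_one {R : Type*} [NormedRing R] [HasSummableGeomSeries R] {x : R}
    (h : ‖x - 1‖ < 1) : IsUnit x := by
  simpa using isUnit_one_sub_of_norm_lt_one (x := 1 - x) (by rwa [norm_sub_rev])

theorem Matrix.IsHermitian.abs_eigenvalues_sub_one_le {n : Type*} [Fintype n] [DecidableEq n]
    {A : Matrix n n ℝ} (hA : A.IsHermitian) (i : n) : |hA.eigenvalues i - 1| ≤ ‖A - 1‖ := by
  have : Nonempty n := ⟨i⟩
  have hmem : hA.eigenvalues i - 1 ∈ spectrum ℝ (A - 1) := by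
    rw [← map_one (algebraMap ℝ (Matrix n n ℝ)), ← spectrum.sub_singleton_eq]
    exact Set.sub_mem_sub (hA.eigenvalues_mem_spectrum_real i) rfl
  simpa using spectrum.norm_le_norm_of_mem hmem

theorem eigValsDesc_mem_range_eigenvalues {n : ℕ} {A : Matrix (Fin n) (Fin n) ℝ}
    (hA : A.IsHermitian) (k : Fin n) : eigValsDesc A k ∈ Set.range hA.eigenvalues := by
  simp only [eigValsDesc, dif_pos hA, Function.comp_apply, Set.mem_range_self]

theorem singValsDesc_div_le_sqrt {m n : ℕ} {A : Matrix (Fin m) (Fin n) ℝ} {a b : ℝ} (ha : 0 < a)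
    (h : ∀ k, eigValsDesc (Aᵀ * A) k ∈ Set.Icc a b) (i j : Fin n) :
    singValsDesc A i / singValsDesc A j ≤ √(b / a) := by
  rw [Real.sqrt_div' _ ha.le]
  exact div_le_div₀ (Real.sqrt_nonneg _) (Real.sqrt_le_sqrt (h i).2) (Real.sqrt_pos.2 ha)
    (Real.sqrt_le_sqrt (h j).1)

/-- If `Z + δZ` is orthogonal and `β = 2‖δZ‖‖Z‖ + ‖δZ‖² < 1`, then the
eigenvalues of `ZᵀZ` lie in `[1-β, 1+β]`, `Z` is invertible, and
`κ(Z) ≤ √((1+β)/(1-β))`. -/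
theorem near_orthogonal_conditioning {n : ℕ} (hn : 0 < n)
    (Z δZ : Matrix (Fin n) (Fin n) ℝ)
    (horth : (Z + δZ)ᵀ * (Z + δZ) = 1)
    (β : ℝ) (hβ : β = 2 * specNorm δZ * specNorm Z + specNorm δZ ^ 2)
    (hβ1 : β < 1) :
    (∀ k : Fin n, eigValsDesc (Zᵀ * Z) k ∈ Set.Icc (1 - β) (1 + β)) ∧
    IsUnit Z ∧
    singValsDesc Z ⟨0, hn⟩ / singValsDesc Z ⟨n - 1, Nat.sub_lt hn one_pos⟩ ≤
      Real.sqrt ((1 + β) / (1 - β)) := by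
  rw [← conjTranspose_eq_transpose_of_trivial, ← star_eq_conjTranspose] at horth
  have hnorm : ‖Zᵀ * Z - 1‖ ≤ β := by
    simpa only [hβ, specNorm_eq_norm, star_eq_conjTranspose, conjTranspose_eq_transpose_of_trivial]
      using norm_star_mul_self_sub_one_le Z δZ horth
  have heig : ∀ k, eigValsDesc (Zᵀ * Z) k ∈ Set.Icc (1 - β) (1 + β) := by
    intro k
    have hHerm : (Zᵀ * Z).IsHermitian := by simpa using isHermitian_conjTranspose_mul_self Z
    obtain ⟨i, hi⟩ := eigValsDesc_mem_range_eigenvalues hHerm k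
    have := abs_le.1 ((hHerm.abs_eigenvalues_sub_one_le i).trans hnorm)
    rw [← hi]; constructor <;> linarith
  exact ⟨heig, isUnit_of_mul_isUnit_right (isUnit_of_norm_sub_one_lt_one (hnorm.trans_lt hβ1)),
    singValsDesc_div_le_sqrt (by linarith) heig _ _⟩
end

section
/- Let Z, Q, R, F_1, F_2 ∈ ℝ^{n×n} satisfy Z = QR + F_1 and QᵀQ = I + F_2 with ‖F_2‖ < 1. Then ‖R‖ ≤ ((1 + ‖F_2‖)/(1 − ‖F_2‖)) (‖Z‖ + ‖F_1‖). -/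
open Matrix

/-! If `Qᵀ Q = 1 + F₂`, then `Rᵀ R = (QR)ᵀ(QR) - Rᵀ F₂ R`, so the C*-identity `‖Rᵀ R‖ = ‖R‖²`
gives `‖R‖² (1 - ‖F₂‖) ≤ ‖QR‖² ≤ (‖Z‖ + ‖F₁‖)²`. This yields `‖R‖ ≤ (‖Z‖ + ‖F₁‖) / √(1 - ‖F₂‖)`,
and `1 / √(1 - t) ≤ (1 + t) / (1 - t)` for `0 ≤ t < 1`. -/

theorem le_one_add_div_one_sub_mul_of_sq_mul_one_sub_le {r s t : ℝ} (hs : 0 ≤ s) (ht₀ : 0 ≤ t)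
    (ht₁ : t < 1) (h : r ^ 2 * (1 - t) ≤ s ^ 2) : r ≤ (1 + t) / (1 - t) * s := by
  have hpos : 0 < 1 - t := by linarith
  rw [div_mul_eq_mul_div, le_div_iff₀ hpos]
  have hsq : (r * (1 - t)) ^ 2 ≤ ((1 + t) * s) ^ 2 :=
    calc (r * (1 - t)) ^ 2 = r ^ 2 * (1 - t) * (1 - t) := by ring
      _ ≤ s ^ 2 * 1 := by gcongr; linarith
      _ ≤ ((1 + t) * s) ^ 2 := by
        rw [mul_one, mul_pow]
        exact le_mul_of_one_le_left (sq_nonneg s) (one_le_pow₀ (by linarith))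
  exact (abs_le_of_sq_le_sq' hsq (by positivity)).2

section CStarRing

variable {A : Type*} [NormedRing A] [StarRing A] [CStarRing A]

theorem norm_sq_mul_one_sub_le_of_star_mul_self_eq_one_add {q f : A} (hq : star q * q = 1 + f)
    (r : A) : ‖r‖ ^ 2 * (1 - ‖f‖) ≤ ‖q * r‖ ^ 2 := by
  have hrr : star r * r = star (q * r) * (q * r) - star r * f * r := by
    rw [star_mul, show star r * star q * (q * r) = star r * (star q * q) * r by noncomm_ring, hq]
    noncomm_ring
  have hf : ‖star r * f * r‖ ≤ ‖f‖ * ‖r‖ ^ 2 :=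
    calc ‖star r * f * r‖ ≤ ‖star r‖ * ‖f‖ * ‖r‖ := norm_mul₃_le
      _ = ‖f‖ * ‖r‖ ^ 2 := by rw [norm_star]; ring
  have hr : ‖r‖ ^ 2 ≤ ‖q * r‖ ^ 2 + ‖f‖ * ‖r‖ ^ 2 :=
    calc ‖r‖ ^ 2 = ‖star (q * r) * (q * r) - star r * f * r‖ := by
          rw [← hrr, CStarRing.norm_star_mul_self, sq]
      _ ≤ ‖star (q * r) * (q * r)‖ + ‖star r * f * r‖ := norm_sub_le _ _
      _ ≤ ‖q * r‖ ^ 2 + ‖f‖ * ‖r‖ ^ 2 := by rw [CStarRing.norm_star_mul_self, ← sq]; gcongr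
  linarith

theorem norm_le_of_eq_mul_add_of_star_mul_self_eq_one_add {z q r f₁ f₂ : A} (hz : z = q * r + f₁)
    (hq : star q * q = 1 + f₂) (hf₂ : ‖f₂‖ < 1) :
    ‖r‖ ≤ ((1 + ‖f₂‖) / (1 - ‖f₂‖)) * (‖z‖ + ‖f₁‖) := by
  have hqr : ‖q * r‖ ≤ ‖z‖ + ‖f₁‖ := by
    rw [show q * r = z - f₁ by rw [hz, add_sub_cancel_right]]
    exact norm_sub_le z f₁
  refine le_one_add_div_one_sub_mul_of_sq_mul_one_sub_le (by positivity) (norm_nonneg f₂) hf₂ ?_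
  calc ‖r‖ ^ 2 * (1 - ‖f₂‖) ≤ ‖q * r‖ ^ 2 :=
        norm_sq_mul_one_sub_le_of_star_mul_self_eq_one_add hq r
    _ ≤ (‖z‖ + ‖f₁‖) ^ 2 := by gcongr

end CStarRing

/-- Bound on `‖R‖` for an approximate QR factorization. -/
theorem R_norm_bound {n : ℕ} (Z Q R F₁ F₂ : Matrix (Fin n) (Fin n) ℝ)
    (hZ : Z = Q * R + F₁) (hQ : Qᵀ * Q = 1 + F₂) (hF₂ : specNorm F₂ < 1) :
    specNorm R ≤ ((1 + specNorm F₂) / (1 - specNorm F₂)) * (specNorm Z + specNorm F₁) := by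
  open scoped Matrix.Norms.L2Operator in
  exact norm_le_of_eq_mul_add_of_star_mul_self_eq_one_add (A := Matrix (Fin n) (Fin n) ℝ)
    hZ (by rwa [star_eq_conjTranspose, conjTranspose_eq_transpose_of_trivial])
    hF₂
end

section
/- Let Z, δZ, Q, R, F_1, F_2 ∈ ℝ^{n×n} satisfy: Z + δZ is orthogonal, Z = QR + F_1, QᵀQ = I + F_2, R is invertible, and ‖F_1‖ + ‖δZ‖ < 1. Then ‖R⁻¹‖ ≤ √(1 + ‖F_2‖) / (1 − ‖F_1‖ − ‖δZ‖). -/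
open Matrix

open RealInnerProductSpace

noncomputable def eMapAux {n : ℕ} (A : Matrix (Fin n) (Fin n) ℝ) :
    EuclideanSpace ℝ (Fin n) →L[ℝ] EuclideanSpace ℝ (Fin n) :=
  LinearMap.toContinuousLinearMap (Matrix.toEuclideanLin A)

lemma eMapAux_mul {n : ℕ} (A B : Matrix (Fin n) (Fin n) ℝ) (x : EuclideanSpace ℝ (Fin n)) :
    eMapAux (A * B) x = eMapAux A (eMapAux B x) := by
  simp [eMapAux, Matrix.toEuclideanLin_apply, Matrix.mulVec_mulVec]

lemma eMapAux_one {n : ℕ} (x : EuclideanSpace ℝ (Fin n)) :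
    eMapAux (1 : Matrix (Fin n) (Fin n) ℝ) x = x := by
  simp [eMapAux, Matrix.toEuclideanLin_apply]

lemma eMapAux_sub {n : ℕ} (A B : Matrix (Fin n) (Fin n) ℝ) (x : EuclideanSpace ℝ (Fin n)) :
    eMapAux (A - B) x = eMapAux A x - eMapAux B x := by
  simp [eMapAux]

lemma eMapAux_add {n : ℕ} (A B : Matrix (Fin n) (Fin n) ℝ) (x : EuclideanSpace ℝ (Fin n)) :
    eMapAux (A + B) x = eMapAux A x + eMapAux B x := by
  simp [eMapAux]

lemma eMapAux_inner {n : ℕ} (A : Matrix (Fin n) (Fin n) ℝ) (x y : EuclideanSpace ℝ (Fin n)) :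
    ⟪eMapAux A x, y⟫ = ⟪x, eMapAux Aᵀ y⟫ := by
  have := Matrix.toEuclideanLin_conjTranspose_eq_adjoint (𝕜 := ℝ) A
  simp only [eMapAux, LinearMap.coe_toContinuousLinearMap']
  rw [show Aᵀ = Aᴴ by ext i j; simp [Matrix.conjTranspose], this]
  exact (LinearMap.adjoint_inner_right _ _ _).symm

lemma eMapAux_le {n : ℕ} (A : Matrix (Fin n) (Fin n) ℝ) (x : EuclideanSpace ℝ (Fin n)) :
    ‖eMapAux A x‖ ≤ specNorm A * ‖x‖ :=
  (eMapAux A).le_opNorm x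

-- quadratic form: ‖A x‖² = ⟪x, (AᵀA) x⟫
lemma eMapAux_norm_sq {n : ℕ} (A : Matrix (Fin n) (Fin n) ℝ) (x : EuclideanSpace ℝ (Fin n)) :
    ‖eMapAux A x‖ ^ 2 = ⟪x, eMapAux (Aᵀ * A) x⟫ := by
  rw [eMapAux_mul, ← eMapAux_inner]
  rw [real_inner_comm, real_inner_self_eq_norm_sq]

/-- Bound on `‖R⁻¹‖` for an approximate QR factorization. -/
theorem R_inv_norm_bound {n : ℕ} (Z δZ Q R F₁ F₂ : Matrix (Fin n) (Fin n) ℝ)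
    (horth : (Z + δZ)ᵀ * (Z + δZ) = 1)
    (hZ : Z = Q * R + F₁) (hQ : Qᵀ * Q = 1 + F₂)
    (hR : IsUnit R)
    (hsmall : specNorm F₁ + specNorm δZ < 1) :
    specNorm R⁻¹ ≤ Real.sqrt (1 + specNorm F₂) / (1 - specNorm F₁ - specNorm δZ) := by
  set a := specNorm F₁ with ha
  set b := specNorm δZ with hb
  set c := specNorm F₂ with hc
  have hc0 : 0 ≤ c := norm_nonneg _
  have hd : 0 < 1 - a - b := by linarith
  have hRR : R * R⁻¹ = 1 := Matrix.mul_nonsing_inv R ((Matrix.isUnit_iff_isUnit_det R).mp hR)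
  have hsq : (0:ℝ) ≤ Real.sqrt (1 + c) := Real.sqrt_nonneg _
  refine ContinuousLinearMap.opNorm_le_bound _ (by positivity) (fun x => ?_)
  set y := eMapAux R⁻¹ x with hy
  have hx : eMapAux R y = x := by
    rw [hy, ← eMapAux_mul, hRR, eMapAux_one]
  -- Step B : ‖(Q*R) y‖ ≤ √(1+c) * ‖R y‖
  have stepB : ‖eMapAux (Q * R) y‖ ≤ Real.sqrt (1 + c) * ‖eMapAux R y‖ := by
    have h1 : ‖eMapAux (Q * R) y‖ ^ 2 ≤ (1 + c) * ‖eMapAux R y‖ ^ 2 := by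
      have h2 : ‖eMapAux (Q * R) y‖ ^ 2 = ‖eMapAux R y‖ ^ 2
          + ⟪eMapAux R y, eMapAux F₂ (eMapAux R y)⟫ := by
        rw [eMapAux_mul, eMapAux_norm_sq, hQ, eMapAux_add, eMapAux_one,
          inner_add_right, real_inner_self_eq_norm_sq]
      have h3 : ⟪eMapAux R y, eMapAux F₂ (eMapAux R y)⟫ ≤ c * ‖eMapAux R y‖ ^ 2 := by
        calc ⟪eMapAux R y, eMapAux F₂ (eMapAux R y)⟫
            ≤ ‖eMapAux R y‖ * ‖eMapAux F₂ (eMapAux R y)‖ := real_inner_le_norm _ _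
          _ ≤ ‖eMapAux R y‖ * (c * ‖eMapAux R y‖) := by
              exact mul_le_mul_of_nonneg_left (eMapAux_le _ _) (norm_nonneg _)
          _ = c * ‖eMapAux R y‖ ^ 2 := by ring
      nlinarith
    have h4 := Real.sqrt_le_sqrt h1
    rwa [Real.sqrt_mul (by linarith : (0:ℝ) ≤ 1 + c), Real.sqrt_sq (norm_nonneg _),
      Real.sqrt_sq (norm_nonneg _)] at h4
  -- Step A : (1 - a - b) * ‖y‖ ≤ ‖(Q*R) y‖
  have stepA : (1 - a - b) * ‖y‖ ≤ ‖eMapAux (Q * R) y‖ := by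
    have hQR : Q * R = (Z + δZ) - δZ - F₁ := by
      rw [hZ]; abel
    have horthn : ‖eMapAux (Z + δZ) y‖ = ‖y‖ := by
      have : ‖eMapAux (Z + δZ) y‖ ^ 2 = ‖y‖ ^ 2 := by
        rw [eMapAux_norm_sq, horth, eMapAux_one, real_inner_self_eq_norm_sq]
      have h := congrArg Real.sqrt this
      rwa [Real.sqrt_sq (norm_nonneg _), Real.sqrt_sq (norm_nonneg _)] at h
    calc (1 - a - b) * ‖y‖
        = ‖y‖ - b * ‖y‖ - a * ‖y‖ := by ring
      _ ≤ ‖eMapAux (Z + δZ) y‖ - ‖eMapAux δZ y‖ - ‖eMapAux F₁ y‖ := by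
          have h1 := eMapAux_le δZ y
          have h2 := eMapAux_le F₁ y
          rw [horthn]; linarith
      _ ≤ ‖eMapAux (Z + δZ) y - eMapAux δZ y - eMapAux F₁ y‖ := by
          have := norm_sub_norm_le (eMapAux (Z + δZ) y - eMapAux δZ y) (eMapAux F₁ y)
          have := norm_sub_norm_le (eMapAux (Z + δZ) y) (eMapAux δZ y)
          linarith
      _ = ‖eMapAux (Q * R) y‖ := by rw [hQR, eMapAux_sub, eMapAux_sub]
  -- combine
  rw [hx] at stepB
  have key : (1 - a - b) * ‖y‖ ≤ Real.sqrt (1 + c) * ‖x‖ := le_trans stepA stepB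
  rw [div_mul_eq_mul_div, le_div_iff₀ hd]
  show ‖y‖ * (1 - a - b) ≤ Real.sqrt (1 + c) * ‖x‖
  linarith [key]
end

section
/- Let A ∈ ℝ^{n×n} be symmetric and let Q, δQ ∈ ℝ^{n×n} be such that Q + δQ is orthogonal. Then for every k with 1 ≤ k ≤ n, |λ_k(A) − λ_k(Qᵀ A Q)| ≤ (2‖Q‖ + ‖δQ‖) ‖δQ‖ ‖A‖. -/
open Matrix

/-!
Put `P = Q + δQ`. Since `P` is orthogonal, `x ↦ P x` is an isometry of Euclidean space, and as
`P x = Q x + δQ x`, the quadratic forms `x ↦ ⟪A (P x), P x⟫` and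
`x ↦ ⟪Qᵀ A Q x, x⟫ = ⟪A (Q x), Q x⟫` differ by at most `(2‖Q‖ + ‖δQ‖) ‖δQ‖ ‖A‖ ‖x‖²`.
By the Courant–Fischer principle the `k`-th largest eigenvalue of a symmetric operator is
controlled by its quadratic form on subspaces of dimension `k + 1` and `n - k`, and the isometry
carries such subspaces to subspaces of the same dimension, so the eigenvalues of `A` and
`Qᵀ A Q` differ by at most the same amount.
-/

open Module Submodule RCLike
open scoped InnerProductSpace

namespace OrthonormalBasis

variable {ι 𝕜 E : Type*} [Fintype ι] [RCLike 𝕜] [NormedAddCommGroup E] [InnerProductSpace 𝕜 E]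

lemma repr_eq_zero_of_mem_span (b : OrthonormalBasis ι 𝕜 E) {s : Set ι} {x : E}
    (hx : x ∈ span 𝕜 (b '' s)) {i : ι} (hi : i ∉ s) : b.repr x i = 0 := by
  induction hx using Submodule.span_induction with
  | mem y hy =>
    obtain ⟨j, hj, rfl⟩ := hy
    rw [b.repr_apply_apply, b.orthonormal.inner_eq_zero (ne_of_mem_of_not_mem hj hi).symm]
  | zero => simp
  | add y z _ _ hy hz => simp [hy, hz]
  | smul a y _ hy => simp [hy]

lemma finrank_span_image (b : OrthonormalBasis ι 𝕜 E) (s : Finset ι) :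
    finrank 𝕜 (span 𝕜 (b '' s)) = s.card := by
  rw [Set.image_eq_range, finrank_span_eq_card (b := fun i : (s : Set ι) => b i)
    (b.orthonormal.linearIndependent.comp _ Subtype.val_injective)]
  simp

end OrthonormalBasis

namespace LinearMap.IsSymmetric

variable {𝕜 E : Type*} [RCLike 𝕜] [NormedAddCommGroup E] [InnerProductSpace 𝕜 E]
  [FiniteDimensional 𝕜 E] {T : E →ₗ[𝕜] E} (hT : T.IsSymmetric)

lemma eigenvalues_eq_comp_cast {m n : ℕ} (hm : finrank 𝕜 E = m) (hn : finrank 𝕜 E = n) :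
    hT.eigenvalues hm = hT.eigenvalues hn ∘ Fin.cast (hm.symm.trans hn) := by
  subst hm hn
  rfl

variable {n : ℕ} (hn : finrank 𝕜 E = n)

lemma re_inner_apply_self_eq_sum (x : E) :
    re ⟪T x, x⟫_𝕜 = ∑ i, hT.eigenvalues hn i * ‖(hT.eigenvectorBasis hn).repr x i‖ ^ 2 := by
  rw [← (hT.eigenvectorBasis hn).repr.inner_map_map, PiLp.inner_apply, map_sum]
  refine Finset.sum_congr rfl fun i _ => ?_
  rw [eigenvectorBasis_apply_self_apply, inner_apply, map_mul (starRingEnd 𝕜), conj_ofReal,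
    mul_left_comm, mul_conj]
  norm_cast

lemma re_inner_apply_self_le_of_mem_span {s : Set (Fin n)} {c : ℝ}
    (hc : ∀ i ∈ s, hT.eigenvalues hn i ≤ c) {x : E}
    (hx : x ∈ span 𝕜 (hT.eigenvectorBasis hn '' s)) : re ⟪T x, x⟫_𝕜 ≤ c * ‖x‖ ^ 2 := by
  rw [hT.re_inner_apply_self_eq_sum hn, ← (hT.eigenvectorBasis hn).repr.norm_map,
    EuclideanSpace.norm_sq_eq, Finset.mul_sum]
  refine Finset.sum_le_sum fun i _ => ?_
  by_cases hi : i ∈ s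
  · exact mul_le_mul_of_nonneg_right (hc i hi) (sq_nonneg _)
  · simp [(hT.eigenvectorBasis hn).repr_eq_zero_of_mem_span hx hi]

lemma le_re_inner_apply_self_of_mem_span {s : Set (Fin n)} {c : ℝ}
    (hc : ∀ i ∈ s, c ≤ hT.eigenvalues hn i) {x : E}
    (hx : x ∈ span 𝕜 (hT.eigenvectorBasis hn '' s)) : c * ‖x‖ ^ 2 ≤ re ⟪T x, x⟫_𝕜 := by
  rw [hT.re_inner_apply_self_eq_sum hn, ← (hT.eigenvectorBasis hn).repr.norm_map,
    EuclideanSpace.norm_sq_eq, Finset.mul_sum]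
  refine Finset.sum_le_sum fun i _ => ?_
  by_cases hi : i ∈ s
  · exact mul_le_mul_of_nonneg_right (hc i hi) (sq_nonneg _)
  · simp [(hT.eigenvectorBasis hn).repr_eq_zero_of_mem_span hx hi]

lemma eigenvalues_le_of_forall_re_inner_apply_self_le (k : Fin n) {c : ℝ}
    {W : Submodule 𝕜 E} (hW : finrank 𝕜 W = n - k)
    (h : ∀ x ∈ W, re ⟪T x, x⟫_𝕜 ≤ c * ‖x‖ ^ 2) : hT.eigenvalues hn k ≤ c := by
  let V := span 𝕜 (hT.eigenvectorBasis hn '' ↑(Finset.Iic k))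
  have hV : finrank 𝕜 V = k + 1 := by
    rw [OrthonormalBasis.finrank_span_image, Fin.card_Iic]
  obtain ⟨x, hxV, hxW, hx⟩ : ∃ x ∈ V, x ∈ W ∧ x ≠ 0 := by
    by_contra! h
    have := Submodule.finrank_add_finrank_le_of_disjoint (Submodule.disjoint_def.mpr h)
    omega
  have hlow := hT.le_re_inner_apply_self_of_mem_span hn
    (fun i hi => hT.eigenvalues_antitone hn (Finset.mem_Iic.mp hi)) hxV
  exact le_of_mul_le_mul_right (hlow.trans (h x hxW)) (by positivity)

variable {F : Type*} [NormedAddCommGroup F] [InnerProductSpace 𝕜 F] [FiniteDimensional 𝕜 F]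
  {S : F →ₗ[𝕜] F} (hS : S.IsSymmetric) (hnF : finrank 𝕜 F = n)

lemma eigenvalues_le_add_of_re_inner_apply_self_le (e : E ≃ₗᵢ[𝕜] F) {ε : ℝ}
    (h : ∀ x, re ⟪T x, x⟫_𝕜 ≤ re ⟪S (e x), e x⟫_𝕜 + ε * ‖x‖ ^ 2) (k : Fin n) :
    hT.eigenvalues hn k ≤ hS.eigenvalues hnF k + ε := by
  let W := span 𝕜 (hS.eigenvectorBasis hnF '' ↑(Finset.Ici k))
  refine hT.eigenvalues_le_of_forall_re_inner_apply_self_le hn k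
    (W := W.comap (e.toLinearEquiv : E →ₗ[𝕜] F)) ?_ fun x hx => ?_
  · rw [Submodule.comap_equiv_eq_map_symm, LinearEquiv.finrank_map_eq,
      OrthonormalBasis.finrank_span_image, Fin.card_Ici]
  · have hup : re ⟪S (e x), e x⟫_𝕜 ≤ hS.eigenvalues hnF k * ‖e x‖ ^ 2 :=
      hS.re_inner_apply_self_le_of_mem_span hnF
        (fun i hi => hS.eigenvalues_antitone hnF (Finset.mem_Ici.mp hi)) hx
    rw [e.norm_map] at hup
    linarith [h x]

lemma abs_eigenvalues_sub_le_of_abs_re_inner_sub_le (e : E ≃ₗᵢ[𝕜] F) {ε : ℝ}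
    (h : ∀ x, |re ⟪S (e x), e x⟫_𝕜 - re ⟪T x, x⟫_𝕜| ≤ ε * ‖x‖ ^ 2) (k : Fin n) :
    |hS.eigenvalues hnF k - hT.eigenvalues hn k| ≤ ε := by
  rw [abs_sub_le_iff, sub_le_iff_le_add', sub_le_iff_le_add']
  constructor
  · refine hS.eigenvalues_le_add_of_re_inner_apply_self_le hnF hT hn e.symm (fun y => ?_) k
    have := (abs_le.mp (h (e.symm y))).2
    rw [e.apply_symm_apply, e.symm.norm_map] at this
    linarith
  · exact hT.eigenvalues_le_add_of_re_inner_apply_self_le hn hS hnF e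
      (fun x => by linarith [(abs_le.mp (h x)).1]) k

end LinearMap.IsSymmetric

lemma ContinuousLinearMap.norm_inner_apply_add_sub_le {𝕜 E : Type*} [RCLike 𝕜]
    [SeminormedAddCommGroup E] [InnerProductSpace 𝕜 E] (T : E →L[𝕜] E) {u v : E} {a b : ℝ}
    (hu : ‖u‖ ≤ a) (hv : ‖v‖ ≤ b) :
    ‖⟪T (u + v), u + v⟫_𝕜 - ⟪T u, u⟫_𝕜‖ ≤ ‖T‖ * (2 * a + b) * b := by
  have hsplit : ⟪T (u + v), u + v⟫_𝕜 - ⟪T u, u⟫_𝕜 = ⟪T u, v⟫_𝕜 + ⟪T v, u + v⟫_𝕜 := by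
    simp only [map_add, inner_add_left, inner_add_right]
    ring
  calc ‖⟪T (u + v), u + v⟫_𝕜 - ⟪T u, u⟫_𝕜‖
      ≤ ‖T u‖ * ‖v‖ + ‖T v‖ * ‖u + v‖ := by
        rw [hsplit]
        exact norm_add_le_of_le (norm_inner_le_norm _ _) (norm_inner_le_norm _ _)
    _ ≤ ‖T‖ * a * b + ‖T‖ * b * (a + b) := by
        have ha : 0 ≤ a := (norm_nonneg u).trans hu
        have hb : 0 ≤ b := (norm_nonneg v).trans hv
        have hTu : ‖T u‖ ≤ ‖T‖ * a := (T.le_opNorm u).trans (by gcongr)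
        have hTv : ‖T v‖ ≤ ‖T‖ * b := (T.le_opNorm v).trans (by gcongr)
        have huv : ‖u + v‖ ≤ a + b := (norm_add_le u v).trans (add_le_add hu hv)
        gcongr
    _ = ‖T‖ * (2 * a + b) * b := by ring

lemma Matrix.inner_toEuclideanLin_conjTranspose_mul_mul {ι κ 𝕜 : Type*} [Fintype ι]
    [DecidableEq ι] [Fintype κ] [DecidableEq κ] [RCLike 𝕜] (A : Matrix ι ι 𝕜) (Q : Matrix ι κ 𝕜)
    (x y : EuclideanSpace 𝕜 κ) :
    ⟪toEuclideanLin (Qᴴ * A * Q) x, y⟫_𝕜 =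
      ⟪toEuclideanLin A (toEuclideanLin Q x), toEuclideanLin Q y⟫_𝕜 := by
  simp only [Matrix.mul_assoc, toLpLin_mul_same, LinearMap.comp_apply,
    toEuclideanLin_conjTranspose_eq_adjoint, LinearMap.adjoint_inner_left]

lemma eigValsDesc_eq_eigenvalues {n : ℕ} {A : Matrix (Fin n) (Fin n) ℝ} (hA : A.IsHermitian) :
    eigValsDesc A =
      (isSymmetric_toEuclideanLin_iff.mpr hA).eigenvalues finrank_euclideanSpace_fin := by
  set g := (isSymmetric_toEuclideanLin_iff.mpr hA).eigenvalues finrank_euclideanSpace_fin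
  have hf : hA.eigenvalues =
      g ∘ Fin.cast (Fintype.card_fin n) ∘ (Fintype.equivOfCardEq (Fintype.card_fin _)).symm := by
    ext i
    exact congrFun (LinearMap.IsSymmetric.eigenvalues_eq_comp_cast _ _ _) _
  let σ : Equiv.Perm (Fin n) :=
    Fin.revPerm.trans ((finCongr (Fintype.card_fin n)).symm.trans
      (Fintype.equivOfCardEq (Fintype.card_fin _)))
  have hσ : hA.eigenvalues ∘ σ = g ∘ Fin.rev := by
    ext i
    simp [hf, σ]
  have hsort : hA.eigenvalues ∘ Tuple.sort hA.eigenvalues = g ∘ Fin.rev := by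
    rw [← hσ, eq_comm, Tuple.comp_sort_eq_comp_iff_monotone, hσ]
    exact (LinearMap.IsSymmetric.eigenvalues_antitone _ _).comp Fin.rev_anti
  ext k
  rw [eigValsDesc, dif_pos hA]
  simpa using congrFun hsort k.rev

/-- Eigenvalue perturbation under a nearly orthogonal congruence. -/
theorem eigenvalue_perturbation_near_orthogonal {n : ℕ}
    (A Q δQ : Matrix (Fin n) (Fin n) ℝ) (hA : Aᵀ = A)
    (horth : (Q + δQ)ᵀ * (Q + δQ) = 1) :
    ∀ k : Fin n,
      |eigValsDesc A k - eigValsDesc (Qᵀ * A * Q) k| ≤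
        (2 * specNorm Q + specNorm δQ) * specNorm δQ * specNorm A := by
  intro k
  have hAh : A.IsHermitian := by rwa [IsHermitian, conjTranspose_eq_transpose_of_trivial]
  have hBh : (Qᵀ * A * Q).IsHermitian := by
    simpa only [conjTranspose_eq_transpose_of_trivial] using isHermitian_conjTranspose_mul_mul Q hAh
  let M : Matrix (Fin n) (Fin n) ℝ ≃⋆ₐ[ℝ]
      (EuclideanSpace ℝ (Fin n) →L[ℝ] EuclideanSpace ℝ (Fin n)) := toEuclideanCLM
  let P := Unitary.linearIsometryEquiv
    ⟨M (Q + δQ), Unitary.map_mem _ (mem_unitaryGroup_iff'.mpr horth)⟩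
  rw [eigValsDesc_eq_eigenvalues hAh, eigValsDesc_eq_eigenvalues hBh]
  refine LinearMap.IsSymmetric.abs_eigenvalues_sub_le_of_abs_re_inner_sub_le _ _ _ _ P
    (fun x => ?_) k
  have hPx : P x = M Q x + M δQ x := by
    rw [← _root_.add_apply, ← map_add]
    rfl
  have hBx := inner_toEuclideanLin_conjTranspose_mul_mul A Q x x
  rw [conjTranspose_eq_transpose_of_trivial] at hBx
  calc |re ⟪M A (P x), P x⟫_ℝ - re ⟪toEuclideanLin (Qᵀ * A * Q) x, x⟫_ℝ|
      = ‖⟪M A (M Q x + M δQ x), M Q x + M δQ x⟫_ℝ - ⟪M A (M Q x), M Q x⟫_ℝ‖ := by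
        rw [hPx, hBx, re_to_real, re_to_real, Real.norm_eq_abs]
        rfl
    _ ≤ specNorm A * (2 * (specNorm Q * ‖x‖) + specNorm δQ * ‖x‖) * (specNorm δQ * ‖x‖) :=
        (M A).norm_inner_apply_add_sub_le ((M Q).le_opNorm x) ((M δQ).le_opNorm x)
    _ = (2 * specNorm Q + specNorm δQ) * specNorm δQ * specNorm A * ‖x‖ ^ 2 := by ring
end

section
/- Let A ∈ ℝ^{m×n} with columns a_1,…,a_n and let 1 ≤ i < j ≤ n. Then there exist reals c, s with c² + s² = 1 such that the matrix B = A · J(i,j;c,s) with columns b_1,…,b_n satisfies b_iᵀ b_j = 0 and ‖b_i‖² + ‖b_j‖² = ‖a_i‖² + ‖a_j‖², where ‖·‖ is the Euclidean vector norm. -/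
open Matrix

lemma colI {m n : ℕ} (A : Matrix (Fin m) (Fin n) ℝ) {i j : Fin n} (hij : i ≠ j)
    (c s : ℝ) (p : Fin m) :
    (A * jacobiRot i j c s) p i = c * A p i - s * A p j := by
  have step : (∑ k : Fin n, A p k * jacobiRot i j c s k i)
      = ∑ k : Fin n, ((if k = i then c * A p i else 0) + (if k = j then -(s * A p j) else 0)) :=
    Finset.sum_congr rfl fun k _ => by
      simp only [jacobiRot]
      by_cases h1 : k = i <;> by_cases h2 : k = j <;>
        simp [h1, h2, hij, Ne.symm hij] <;> ring
  rw [Matrix.mul_apply, step, Finset.sum_add_distrib, Finset.sum_ite_eq', Finset.sum_ite_eq']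
  simp only [Finset.mem_univ, if_true]
  ring

lemma colJ {m n : ℕ} (A : Matrix (Fin m) (Fin n) ℝ) {i j : Fin n} (hij : i ≠ j)
    (c s : ℝ) (p : Fin m) :
    (A * jacobiRot i j c s) p j = s * A p i + c * A p j := by
  have step : (∑ k : Fin n, A p k * jacobiRot i j c s k j)
      = ∑ k : Fin n, ((if k = i then s * A p i else 0) + (if k = j then c * A p j else 0)) :=
    Finset.sum_congr rfl fun k _ => by
      simp only [jacobiRot]
      by_cases h1 : k = i <;> by_cases h2 : k = j <;>
        simp [h1, h2, hij, Ne.symm hij] <;> ring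
  rw [Matrix.mul_apply, step, Finset.sum_add_distrib, Finset.sum_ite_eq', Finset.sum_ite_eq']
  simp only [Finset.mem_univ, if_true]

lemma half_angle (x y : ℝ) (h : x ^ 2 + y ^ 2 = 1) :
    ∃ c s : ℝ, c ^ 2 + s ^ 2 = 1 ∧ c ^ 2 - s ^ 2 = x ∧ 2 * c * s = y := by
  by_cases hx : x = -1
  · have hy : y = 0 := by nlinarith
    exact ⟨0, 1, by ring, by rw [hx]; ring, by rw [hy]; ring⟩
  · have hxge : -1 ≤ x := by nlinarith [sq_nonneg (x + 1)]
    have h1 : 0 < 1 + x := lt_of_le_of_ne (by linarith) (by intro hc; exact hx (by linarith))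
    set c := Real.sqrt ((1 + x) / 2) with hc
    have hc2 : c ^ 2 = (1 + x) / 2 := Real.sq_sqrt (by linarith)
    have hcpos : 0 < c := Real.sqrt_pos.2 (by linarith)
    refine ⟨c, y / (2 * c), ?_, ?_, ?_⟩
    · field_simp
      nlinarith
    · field_simp
      nlinarith
    · field_simp

/-- One-sided Jacobi rotation orthogonalizing two columns while
preserving the sum of their squared Euclidean norms. -/
theorem one_sided_jacobi_exists {m n : ℕ} (A : Matrix (Fin m) (Fin n) ℝ)
    (i j : Fin n) (hij : i < j) :
    ∃ c s : ℝ, c ^ 2 + s ^ 2 = 1 ∧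
      ∀ B : Matrix (Fin m) (Fin n) ℝ, B = A * jacobiRot i j c s →
        (∑ p, B p i * B p j) = 0 ∧
        (∑ p, B p i ^ 2) + (∑ p, B p j ^ 2) = (∑ p, A p i ^ 2) + (∑ p, A p j ^ 2) := by
  have hne : i ≠ j := ne_of_lt hij
  set α := ∑ p, A p i ^ 2 with hα
  set β := ∑ p, A p j ^ 2 with hβ
  set γ := ∑ p, A p i * A p j with hγ
  -- main reduction: any (c,s) on the unit circle with the angle condition works
  have key : ∀ c s : ℝ, c ^ 2 + s ^ 2 = 1 →
      c * s * (α - β) + (c ^ 2 - s ^ 2) * γ = 0 →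
      ∀ B : Matrix (Fin m) (Fin n) ℝ, B = A * jacobiRot i j c s →
        (∑ p, B p i * B p j) = 0 ∧
        (∑ p, B p i ^ 2) + (∑ p, B p j ^ 2) = α + β := by
    intro c s hcs hang B hB
    have hBi : ∀ p, B p i = c * A p i - s * A p j := fun p => by
      rw [hB]; exact colI A hne c s p
    have hBj : ∀ p, B p j = s * A p i + c * A p j := fun p => by
      rw [hB]; exact colJ A hne c s p
    constructor
    · have e1 : (∑ p, B p i * B p j)
          = ∑ p, (c * s * A p i ^ 2 - c * s * A p j ^ 2 + (c ^ 2 - s ^ 2) * (A p i * A p j)) :=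
        Finset.sum_congr rfl fun p _ => by rw [hBi p, hBj p]; ring
      rw [e1, Finset.sum_add_distrib, Finset.sum_sub_distrib, ← Finset.mul_sum,
        ← Finset.mul_sum, ← Finset.mul_sum, ← hα, ← hβ, ← hγ]
      linarith [hang]
    · have e2 : (∑ p, B p i ^ 2) + (∑ p, B p j ^ 2)
          = ∑ p, (B p i ^ 2 + B p j ^ 2) := (Finset.sum_add_distrib).symm
      have e3 : ∀ p : Fin m, B p i ^ 2 + B p j ^ 2 = A p i ^ 2 + A p j ^ 2 := by
        intro p
        rw [hBi p, hBj p]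
        have : (c * A p i - s * A p j) ^ 2 + (s * A p i + c * A p j) ^ 2
            = (c ^ 2 + s ^ 2) * (A p i ^ 2 + A p j ^ 2) := by ring
        rw [this, hcs, one_mul]
      rw [e2, Finset.sum_congr rfl fun p _ => e3 p, Finset.sum_add_distrib]
  by_cases hr : (α - β) ^ 2 + 4 * γ ^ 2 = 0
  · have hγ0 : γ = 0 := by nlinarith [sq_nonneg (α - β), sq_nonneg γ]
    refine ⟨1, 0, by norm_num, key 1 0 (by norm_num) (by rw [hγ0]; ring)⟩
  · have hrpos : 0 < (α - β) ^ 2 + 4 * γ ^ 2 :=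
      lt_of_le_of_ne (by positivity) (Ne.symm hr)
    set r := Real.sqrt ((α - β) ^ 2 + 4 * γ ^ 2) with hrdef
    have hr2 : r ^ 2 = (α - β) ^ 2 + 4 * γ ^ 2 := Real.sq_sqrt (le_of_lt hrpos)
    have hrp : 0 < r := Real.sqrt_pos.2 hrpos
    obtain ⟨c, s, hcs, hx, hy⟩ := half_angle ((α - β) / r) (-(2 * γ) / r)
      (by field_simp; nlinarith)
    refine ⟨c, s, hcs, key c s hcs ?_⟩
    have h1 : c * s * (α - β) + (c ^ 2 - s ^ 2) * γ
        = (-(2 * γ) / r) / 2 * (α - β) + ((α - β) / r) * γ := by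
      rw [← hx, ← hy]; ring
    rw [h1]
    field_simp
    ring
end

section
/- Let A ∈ ℝ^{m×n} with columns a_1,…,a_n, let 1 ≤ i < j ≤ n, let J = J(i,j;c,s) be a Jacobi rotation, and set B = A J with columns b_1,…,b_n. If b_iᵀ b_j = 0, then ‖off(BᵀB)‖_F² = ‖off(AᵀA)‖_F² − 2 (a_iᵀ a_j)². -/
open Matrix

private lemma sum_apart {n : ℕ} (i j : Fin n) (hij : i ≠ j) (f : Fin n → ℝ)
    (h : ∀ r, r ≠ i → r ≠ j → f r = 0) : ∑ r, f r = f i + f j := by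
  have h2 : ∑ r ∈ ({i, j} : Finset (Fin n)), f r = ∑ r, f r := by
    apply Finset.sum_subset (Finset.subset_univ _)
    intro x _ hx
    simp only [Finset.mem_insert, Finset.mem_singleton, not_or] at hx
    exact h x hx.1 hx.2
  rw [← h2, Finset.sum_pair hij]

/-- Off-diagonal decrease of `BᵀB` under a one-sided Jacobi rotation
that orthogonalizes columns `i` and `j`. -/
theorem one_sided_jacobi_off_decrease {m n : ℕ} (A : Matrix (Fin m) (Fin n) ℝ)
    (i j : Fin n) (hij : i < j) (c s : ℝ) (hcs : c ^ 2 + s ^ 2 = 1)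
    (B : Matrix (Fin m) (Fin n) ℝ) (hB : B = A * jacobiRot i j c s)
    (hzero : (∑ p, B p i * B p j) = 0) :
    frobNorm (offDiag (Bᵀ * B)) ^ 2 =
      frobNorm (offDiag (Aᵀ * A)) ^ 2 - 2 * (∑ p, A p i * A p j) ^ 2 := by
  have hij' : i ≠ j := ne_of_lt hij
  have hji' : j ≠ i := hij'.symm
  -- column formulas for B
  have hBi : ∀ p, B p i = c * A p i - s * A p j := by
    intro p
    have hz : ∀ r, r ≠ i → r ≠ j → A p r * jacobiRot i j c s r i = 0 := by
      intro r hri hrj; simp [jacobiRot, hri, hrj]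
    rw [hB, Matrix.mul_apply, sum_apart i j hij' _ hz]
    simp [jacobiRot, hij', hji']
    ring
  have hBj : ∀ p, B p j = s * A p i + c * A p j := by
    intro p
    have hz : ∀ r, r ≠ i → r ≠ j → A p r * jacobiRot i j c s r j = 0 := by
      intro r hri hrj; simp [jacobiRot, hri, hrj]
    rw [hB, Matrix.mul_apply, sum_apart i j hij' _ hz]
    simp [jacobiRot, hij', hji']
    ring
  have hBo : ∀ p q, q ≠ i → q ≠ j → B p q = A p q := by
    intro p q hqi hqj
    rw [hB, Matrix.mul_apply, Finset.sum_eq_single q]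
    · simp [jacobiRot, hqi, hqj]
    · intro r _ hrq; simp [jacobiRot, hqi, hqj, hrq]
    · simp
  -- entry formulas
  have hAT : ∀ p q, (Aᵀ * A) p q = ∑ r, A r p * A r q := by
    intro p q; simp [Matrix.mul_apply]
  have hBT : ∀ p q, (Bᵀ * B) p q = ∑ r, B r p * B r q := by
    intro p q; simp [Matrix.mul_apply]
  have hHiq : ∀ q, q ≠ i → q ≠ j → (Bᵀ * B) i q = c * (Aᵀ * A) i q - s * (Aᵀ * A) j q := by
    intro q hqi hqj
    rw [hBT, hAT, hAT, Finset.mul_sum, Finset.mul_sum, ← Finset.sum_sub_distrib]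
    exact Finset.sum_congr rfl (fun r _ => by rw [hBi r, hBo r q hqi hqj]; ring)
  have hHjq : ∀ q, q ≠ i → q ≠ j → (Bᵀ * B) j q = s * (Aᵀ * A) i q + c * (Aᵀ * A) j q := by
    intro q hqi hqj
    rw [hBT, hAT, hAT, Finset.mul_sum, Finset.mul_sum, ← Finset.sum_add_distrib]
    exact Finset.sum_congr rfl (fun r _ => by rw [hBj r, hBo r q hqi hqj]; ring)
  have hHpi : ∀ p, p ≠ i → p ≠ j → (Bᵀ * B) p i = c * (Aᵀ * A) p i - s * (Aᵀ * A) p j := by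
    intro p hpi hpj
    rw [hBT, hAT, hAT, Finset.mul_sum, Finset.mul_sum, ← Finset.sum_sub_distrib]
    exact Finset.sum_congr rfl (fun r _ => by rw [hBi r, hBo r p hpi hpj]; ring)
  have hHpj : ∀ p, p ≠ i → p ≠ j → (Bᵀ * B) p j = s * (Aᵀ * A) p i + c * (Aᵀ * A) p j := by
    intro p hpi hpj
    rw [hBT, hAT, hAT, Finset.mul_sum, Finset.mul_sum, ← Finset.sum_add_distrib]
    exact Finset.sum_congr rfl (fun r _ => by rw [hBj r, hBo r p hpi hpj]; ring)
  have hHoo : ∀ p q, p ≠ i → p ≠ j → q ≠ i → q ≠ j → (Bᵀ * B) p q = (Aᵀ * A) p q := by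
    intro p q hpi hpj hqi hqj
    rw [hBT, hAT]
    exact Finset.sum_congr rfl (fun r _ => by rw [hBo r p hpi hpj, hBo r q hqi hqj])
  have hHij : (Bᵀ * B) i j = 0 := by rw [hBT]; exact hzero
  have hHji : (Bᵀ * B) j i = 0 := by
    rw [hBT, Finset.sum_congr rfl (fun r _ => mul_comm (B r j) (B r i))]
    exact hzero
  have hGji : (Aᵀ * A) j i = (Aᵀ * A) i j := by
    rw [hAT, hAT]
    exact Finset.sum_congr rfl (fun r _ => mul_comm _ _)
  -- rotation invariances
  have I1 : ∀ q, q ≠ i → q ≠ j →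
      (Bᵀ * B) i q ^ 2 + (Bᵀ * B) j q ^ 2 = (Aᵀ * A) i q ^ 2 + (Aᵀ * A) j q ^ 2 := by
    intro q hqi hqj
    rw [hHiq q hqi hqj, hHjq q hqi hqj]
    linear_combination ((Aᵀ * A) i q ^ 2 + (Aᵀ * A) j q ^ 2) * hcs
  have I2 : ∀ p, p ≠ i → p ≠ j →
      (Bᵀ * B) p i ^ 2 + (Bᵀ * B) p j ^ 2 = (Aᵀ * A) p i ^ 2 + (Aᵀ * A) p j ^ 2 := by
    intro p hpi hpj
    rw [hHpi p hpi hpj, hHpj p hpi hpj]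
    linear_combination ((Aᵀ * A) p i ^ 2 + (Aᵀ * A) p j ^ 2) * hcs
  have hoff_ne : ∀ (M : Matrix (Fin n) (Fin n) ℝ) (p q : Fin n), p ≠ q →
      offDiag M p q = M p q := by
    intro M p q h; simp [offDiag, h]
  have hoff_eq : ∀ (M : Matrix (Fin n) (Fin n) ℝ) (p : Fin n), offDiag M p p = 0 := by
    intro M p; simp [offDiag]
  -- the key computation
  have key : ∑ p, ∑ q, (offDiag (Bᵀ * B) p q ^ 2 - offDiag (Aᵀ * A) p q ^ 2)
      = -(2 * ((Aᵀ * A) i j) ^ 2) := by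
    have houter : ∀ p, p ≠ i → p ≠ j →
        (∑ q, (offDiag (Bᵀ * B) p q ^ 2 - offDiag (Aᵀ * A) p q ^ 2)) = 0 := by
      intro p hpi hpj
      have hin : ∀ q, q ≠ i → q ≠ j →
          offDiag (Bᵀ * B) p q ^ 2 - offDiag (Aᵀ * A) p q ^ 2 = 0 := by
        intro q hqi hqj
        by_cases hpq : p = q
        · subst hpq; rw [hoff_eq, hoff_eq]; ring
        · rw [hoff_ne _ p q hpq, hoff_ne _ p q hpq, hHoo p q hpi hpj hqi hqj]; ring
      rw [sum_apart i j hij' _ hin]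
      rw [hoff_ne _ p i hpi, hoff_ne _ p i hpi, hoff_ne _ p j hpj, hoff_ne _ p j hpj]
      have := I2 p hpi hpj
      linarith
    rw [sum_apart i j hij' _ houter, ← Finset.sum_add_distrib]
    have hin : ∀ q, q ≠ i → q ≠ j →
        (offDiag (Bᵀ * B) i q ^ 2 - offDiag (Aᵀ * A) i q ^ 2)
          + (offDiag (Bᵀ * B) j q ^ 2 - offDiag (Aᵀ * A) j q ^ 2) = 0 := by
      intro q hqi hqj
      rw [hoff_ne _ i q (Ne.symm hqi), hoff_ne _ i q (Ne.symm hqi),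
        hoff_ne _ j q (Ne.symm hqj), hoff_ne _ j q (Ne.symm hqj)]
      have := I1 q hqi hqj
      linarith
    rw [sum_apart i j hij' _ hin]
    rw [hoff_eq, hoff_eq, hoff_eq, hoff_eq,
      hoff_ne _ j i hji', hoff_ne _ j i hji', hoff_ne _ i j hij', hoff_ne _ i j hij',
      hHij, hHji, hGji]
    ring
  -- conclude
  have hfroB : frobNorm (offDiag (Bᵀ * B)) ^ 2 = ∑ p, ∑ q, offDiag (Bᵀ * B) p q ^ 2 := by
    rw [frobNorm, Real.sq_sqrt]; positivity
  have hfroA : frobNorm (offDiag (Aᵀ * A)) ^ 2 = ∑ p, ∑ q, offDiag (Aᵀ * A) p q ^ 2 := by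
    rw [frobNorm, Real.sq_sqrt]; positivity
  have hsub : ∑ p, ∑ q, (offDiag (Bᵀ * B) p q ^ 2 - offDiag (Aᵀ * A) p q ^ 2)
      = (∑ p, ∑ q, offDiag (Bᵀ * B) p q ^ 2) - ∑ p, ∑ q, offDiag (Aᵀ * A) p q ^ 2 := by
    simp [Finset.sum_sub_distrib]
  have hGij : (Aᵀ * A) i j = ∑ p, A p i * A p j := hAT i j
  rw [hfroB, hfroA, ← hGij]
  linarith [key, hsub]
end
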